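/- Let β̃ minimize G(β) = ‖y - X_Aβ‖₂² + λ₂‖β‖₂² + λ₁∑_{j∈A} w_j|β_j| over R^{|A|} and let β̃₀ minimize the ridge objective ‖y - X_Aβ‖₂² + λ₂‖β‖₂². If λ_min(X_AᵀX_A) ≥ bn and w_j ≤ W for all j ∈ A, then min_{j∈A}|β̃_j| ≥ min_{j∈A}|β̃₀_j| - λ₁·W·sqrt(|A|)/(bn + λ₂). -/

import Mathlib

/-!
Write `F` for the ridge loss and `v = β̃ - β̃₀`. Since `F` is quadratic and minimal at `β̃₀`, the
linear term of its expansion at `β̃₀` vanishes, so `F(β̃) - F(β̃₀) = ‖X_A v‖² + λ₂‖v‖²`, which the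
eigenvalue bound makes at least `(bn + λ₂)‖v‖₂²`. Comparing the elastic-net objective at `β̃` and
at `β̃₀` bounds the same difference above by
`λ₁ ∑ w_j (|β̃₀_j| - |β̃_j|) ≤ λ₁ W ‖v‖₁ ≤ λ₁ W √|A| ‖v‖₂`.
Hence `‖v‖₂ ≤ λ₁ W √|A| / (bn + λ₂)`, and no coordinate of `β̃₀` moves by more than that.
-/

open Matrix Finset
open scoped ComplexOrder

namespace Matrix.IsHermitian

variable {𝕜 ι : Type*} [RCLike 𝕜] [Fintype ι] [DecidableEq ι] {A : Matrix ι ι 𝕜}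

theorem posSemidef_sub_smul_one (hA : A.IsHermitian) {c : ℝ}
    (hc : ∀ i, c ≤ hA.eigenvalues i) : (A - (c : 𝕜) • 1).PosSemidef := by
  set U : Matrix ι ι 𝕜 := (hA.eigenvectorUnitary : Matrix ι ι 𝕜)
  have hU : U * star U = 1 := mem_unitaryGroup_iff.mp hA.eigenvectorUnitary.2
  have hdecomp : A - (c : 𝕜) • 1
      = U * diagonal (fun i => ((hA.eigenvalues i - c : ℝ) : 𝕜)) * star U := by
    have hdiag : diagonal (fun i => ((hA.eigenvalues i - c : ℝ) : 𝕜))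
        = diagonal (RCLike.ofReal ∘ hA.eigenvalues) - (c : 𝕜) • 1 := by
      ext i j
      by_cases hij : i = j <;> simp [hij, Algebra.algebraMap_eq_smul_one, sub_smul]
    conv_lhs => rw [hA.spectral_theorem, Unitary.conjStarAlgAut_apply]
    rw [hdiag, mul_sub, sub_mul, Matrix.mul_smul, Matrix.smul_mul, mul_one, hU]
  rw [hdecomp]
  have hdiag_psd : (diagonal fun i => ((hA.eigenvalues i - c : ℝ) : 𝕜)).PosSemidef :=
    PosSemidef.diagonal fun i => RCLike.ofReal_nonneg.2 (sub_nonneg.2 (hc i))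
  simpa [star_eq_conjTranspose] using hdiag_psd.mul_mul_conjTranspose_same U

theorem mul_dotProduct_self_le {B : Matrix ι ι ℝ} (hB : B.IsHermitian) {c : ℝ}
    (hc : ∀ i, c ≤ hB.eigenvalues i) (v : ι → ℝ) : c * (v ⬝ᵥ v) ≤ v ⬝ᵥ (B *ᵥ v) := by
  simpa [sub_mulVec, smul_mulVec, dotProduct_sub, dotProduct_smul] using
    (hB.posSemidef_sub_smul_one hc).dotProduct_mulVec_nonneg v

end Matrix.IsHermitian

theorem eq_zero_of_forall_nonneg_mul_add_mul_sq {K : Type*} [Field K] [LinearOrder K]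
    [IsStrictOrderedRing K] {a b : K} (h : ∀ t, 0 ≤ a * t + b * t ^ 2) :
    a = 0 := by
  have hdiscrim := discrim_le_zero (a := b) (b := a) (c := 0) fun t => by
    linarith [h t, sq t]
  rw [discrim] at hdiscrim
  nlinarith [sq_nonneg a]

section Ridge

variable {m ι : Type*} [Fintype m] [Fintype ι] (X : Matrix m ι ℝ) (y : m → ℝ) (l2 : ℝ)

def ridgeLoss (β : ι → ℝ) : ℝ :=
  ∑ i, (y i - (X *ᵥ β) i) ^ 2 + l2 * ∑ j, β j ^ 2

def ridgeQuadraticForm (v : ι → ℝ) : ℝ :=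
  ∑ i, (X *ᵥ v) i ^ 2 + l2 * ∑ j, v j ^ 2

theorem ridgeLoss_add_smul (β v : ι → ℝ) (t : ℝ) :
    ridgeLoss X y l2 (β + t • v) = ridgeLoss X y l2 β
      + 2 * t * (l2 * ∑ j, β j * v j - ∑ i, (y i - (X *ᵥ β) i) * (X *ᵥ v) i)
      + t ^ 2 * ridgeQuadraticForm X l2 v := by
  have hfit : ∑ i, (y i - (X *ᵥ (β + t • v)) i) ^ 2 = ∑ i, (y i - (X *ᵥ β) i) ^ 2
      - 2 * t * ∑ i, (y i - (X *ᵥ β) i) * (X *ᵥ v) i + t ^ 2 * ∑ i, (X *ᵥ v) i ^ 2 := by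
    rw [mul_sum, mul_sum, ← sum_sub_distrib, ← sum_add_distrib]
    refine sum_congr rfl fun i _ => ?_
    rw [mulVec_add, mulVec_smul, Pi.add_apply, Pi.smul_apply, smul_eq_mul]
    ring
  have hpen : ∑ j, (β + t • v) j ^ 2
      = ∑ j, β j ^ 2 + 2 * t * ∑ j, β j * v j + t ^ 2 * ∑ j, v j ^ 2 := by
    rw [mul_sum, mul_sum, ← sum_add_distrib, ← sum_add_distrib]
    refine sum_congr rfl fun j _ => ?_
    rw [Pi.add_apply, Pi.smul_apply, smul_eq_mul]
    ring
  rw [ridgeLoss, ridgeLoss, ridgeQuadraticForm, hfit, hpen]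
  ring

theorem ridgeLoss_eq_add_ridgeQuadraticForm {β₀ : ι → ℝ}
    (hmin : ∀ β, ridgeLoss X y l2 β₀ ≤ ridgeLoss X y l2 β) (β : ι → ℝ) :
    ridgeLoss X y l2 β = ridgeLoss X y l2 β₀ + ridgeQuadraticForm X l2 (β - β₀) := by
  have hexpand := ridgeLoss_add_smul X y l2 β₀ (β - β₀)
  -- the linear coefficient vanishes since `β₀` minimizes the loss on the line `β₀ + t (β - β₀)`
  set D := l2 * ∑ j, β₀ j * (β - β₀) j - ∑ i, (y i - (X *ᵥ β₀) i) * (X *ᵥ (β - β₀)) i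
  have hD : 2 * D = 0 :=
    eq_zero_of_forall_nonneg_mul_add_mul_sq (b := ridgeQuadraticForm X l2 (β - β₀)) fun t => by
      linarith [hmin (β₀ + t • (β - β₀)), hexpand t]
  have hline := hexpand 1
  rw [one_smul, add_sub_cancel] at hline
  linarith

theorem mul_sum_sq_le_ridgeQuadraticForm [DecidableEq ι] (hH : (Xᵀ * X).IsHermitian) {c : ℝ}
    (hc : ∀ i, c ≤ hH.eigenvalues i) (v : ι → ℝ) :
    (c + l2) * ∑ j, v j ^ 2 ≤ ridgeQuadraticForm X l2 v := by
  have hquad : v ⬝ᵥ ((Xᵀ * X) *ᵥ v) = ∑ i, (X *ᵥ v) i ^ 2 := by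
    rw [← mulVec_mulVec, dotProduct_mulVec, vecMul_transpose]
    simp only [dotProduct, sq]
  have hself : v ⬝ᵥ v = ∑ j, v j ^ 2 := by simp only [dotProduct, sq]
  have heig := hH.mul_dotProduct_self_le hc v
  rw [hquad, hself] at heig
  rw [ridgeQuadraticForm]
  linarith

def elasticNetLoss (l1 : ℝ) (w β : ι → ℝ) : ℝ :=
  ridgeLoss X y l2 β + l1 * ∑ j, w j * |β j|

end Ridge

theorem sum_mul_abs_sub_sum_mul_abs_le {ι : Type*} [Fintype ι] {w : ι → ℝ} {W : ℝ}
    (hw : ∀ j, 0 ≤ w j) (hW : ∀ j, w j ≤ W) (a b : ι → ℝ) :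
    ∑ j, w j * |a j| - ∑ j, w j * |b j| ≤ W * ∑ j, |a j - b j| := by
  rw [← sum_sub_distrib, mul_sum]
  refine sum_le_sum fun j _ => ?_
  calc w j * |a j| - w j * |b j| = w j * (|a j| - |b j|) := by ring
    _ ≤ w j * |a j - b j| := mul_le_mul_of_nonneg_left (abs_sub_abs_le_abs_sub _ _) (hw j)
    _ ≤ W * |a j - b j| := mul_le_mul_of_nonneg_right (hW j) (abs_nonneg _)

theorem sum_abs_le_sqrt_card_mul_sqrt_sum_sq {ι : Type*} [Fintype ι] (v : ι → ℝ) :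
    ∑ j, |v j| ≤ √(Fintype.card ι) * √(∑ j, v j ^ 2) := by
  simpa using Real.sum_mul_le_sqrt_mul_sqrt univ 1 fun j => |v j|

theorem abs_le_sqrt_sum_sq {ι : Type*} [Fintype ι] (v : ι → ℝ) (j : ι) :
    |v j| ≤ √(∑ j, v j ^ 2) :=
  Real.abs_le_sqrt (single_le_sum (fun j _ => sq_nonneg (v j)) (mem_univ j))

theorem Finset.inf'_abs_sub_le_inf'_abs {ι : Type*} {s : Finset ι} (hs : s.Nonempty)
    {a b : ι → ℝ} {r : ℝ} (hab : ∀ j, |a j - b j| ≤ r) :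
    s.inf' hs (fun j => |a j|) - r ≤ s.inf' hs fun j => |b j| := by
  refine le_inf' _ _ fun j hj => ?_
  linarith [inf'_le (fun j => |a j|) hj, abs_sub_abs_le_abs_sub (a j) (b j), hab j]

theorem sqrt_sum_sq_sub_le_of_isMin_elasticNetLoss {m ι : Type*} [Fintype m] [Fintype ι]
    [DecidableEq ι] [Nonempty ι] {X : Matrix m ι ℝ} {y : m → ℝ} {l2 l1 c W : ℝ} {w : ι → ℝ}
    (hH : (Xᵀ * X).IsHermitian) (hc : ∀ i, c ≤ hH.eigenvalues i) (hcl2 : 0 < c + l2)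
    (hl1 : 0 ≤ l1) (hw : ∀ j, 0 ≤ w j) (hW : ∀ j, w j ≤ W) {β β₀ : ι → ℝ}
    (hβ : ∀ β', elasticNetLoss X y l2 l1 w β ≤ elasticNetLoss X y l2 l1 w β')
    (hβ₀ : ∀ β', ridgeLoss X y l2 β₀ ≤ ridgeLoss X y l2 β') :
    √(∑ j, (β - β₀) j ^ 2) ≤ l1 * W * √(Fintype.card ι) / (c + l2) := by
  set s := √(∑ j, (β - β₀) j ^ 2)
  have hs : 0 ≤ s := Real.sqrt_nonneg _
  have hW0 : 0 ≤ W := (hw (Classical.arbitrary ι)).trans (hW _)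
  have hsq : (c + l2) * s ^ 2 ≤ l1 * W * √(Fintype.card ι) * s := calc
    (c + l2) * s ^ 2 = (c + l2) * ∑ j, (β - β₀) j ^ 2 := by
        rw [Real.sq_sqrt (sum_nonneg fun j _ => sq_nonneg _)]
    _ ≤ ridgeQuadraticForm X l2 (β - β₀) := mul_sum_sq_le_ridgeQuadraticForm X l2 hH hc _
    _ = ridgeLoss X y l2 β - ridgeLoss X y l2 β₀ := by
        rw [ridgeLoss_eq_add_ridgeQuadraticForm X y l2 hβ₀ β]; ring
    _ ≤ l1 * (∑ j, w j * |β₀ j| - ∑ j, w j * |β j|) := by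
        have hopt := hβ β₀
        rw [elasticNetLoss, elasticNetLoss] at hopt
        linarith
    _ ≤ l1 * (W * ∑ j, |(β - β₀) j|) := by
        gcongr
        simpa only [Pi.sub_apply, abs_sub_comm] using sum_mul_abs_sub_sum_mul_abs_le hw hW β₀ β
    _ ≤ l1 * (W * (√(Fintype.card ι) * s)) := by
        gcongr
        exact sum_abs_le_sqrt_card_mul_sqrt_sum_sq _
    _ = l1 * W * √(Fintype.card ι) * s := by ring
  rw [le_div_iff₀ hcl2]
  rcases hs.eq_or_lt with hs0 | hspos
  · rw [← hs0, zero_mul]; positivity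
  · nlinarith

/-- If `β̃` minimizes the weighted elastic-net objective on `X_A`, `β̃₀` the ridge
objective, `λ_min(X_AᵀX_A) ≥ bn` and `w_j ≤ W`, then
`min_j |β̃_j| ≥ min_j |β̃₀_j| - λ₁ W sqrt(|A|)/(bn + λ₂)`. -/
theorem stmt_18 {n k : ℕ} (hk : 0 < k) (y : Fin n → ℝ)
    (XA : Matrix (Fin n) (Fin k) ℝ) (hH : (XAᵀ * XA).IsHermitian)
    (b : ℝ) (hbn : 0 < b * n) (heigLB : ∀ i, b * n ≤ hH.eigenvalues i)
    (l2 l1 : ℝ) (hl2 : 0 < l2) (hl1 : 0 ≤ l1)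
    (w : Fin k → ℝ) (hw : ∀ j, 0 ≤ w j) (W : ℝ) (hW : ∀ j, w j ≤ W)
    (btil b0 : Fin k → ℝ)
    (hbtil : ∀ β : Fin k → ℝ,
      (∑ i, (y i - XA.mulVec btil i) ^ 2) + l2 * ∑ j, (btil j) ^ 2
          + l1 * ∑ j, w j * |btil j| ≤
        (∑ i, (y i - XA.mulVec β i) ^ 2) + l2 * ∑ j, (β j) ^ 2
          + l1 * ∑ j, w j * |β j|)
    (hb0 : ∀ β : Fin k → ℝ,
      (∑ i, (y i - XA.mulVec b0 i) ^ 2) + l2 * ∑ j, (b0 j) ^ 2 ≤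
        (∑ i, (y i - XA.mulVec β i) ^ 2) + l2 * ∑ j, (β j) ^ 2) :
    (Finset.univ.inf' (Finset.univ_nonempty_iff.2 ⟨⟨0, hk⟩⟩) fun j => |b0 j|)
        - l1 * W * Real.sqrt k / (b * n + l2) ≤
      Finset.univ.inf' (Finset.univ_nonempty_iff.2 ⟨⟨0, hk⟩⟩) fun j => |btil j| := by
  have : Nonempty (Fin k) := ⟨⟨0, hk⟩⟩
  have hdist := sqrt_sum_sq_sub_le_of_isMin_elasticNetLoss hH heigLB (add_pos hbn hl2) hl1 hw hW
    hbtil hb0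
  rw [Fintype.card_fin] at hdist
  refine inf'_abs_sub_le_inf'_abs _ fun j => ?_
  rw [abs_sub_comm]
  exact (abs_le_sqrt_sum_sq (btil - b0) j).trans hdist
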